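/- If M is a minimal subgraph of ℤⁿ, then for every x and r, |δM ∩ B̂_r(x)| ≤ 4n²(2r+1)^{n−1}, i.e. the boundary of M has at most (n−1)-dimensional polynomial growth in ∞-normed balls. -/

import Mathlib

open Set

/-- Vertices of the integer lattice `ℤⁿ`. -/
abbrev Vtx (n : ℕ) := Fin n → ℤ

/-- Adjacency in the integer lattice: Euclidean (equivalently ℓ¹) distance one. -/
def ZAdj {n : ℕ} (x y : Vtx n) : Prop := (∑ i, (x i - y i).natAbs) = 1

/-- Exterior vertex boundary. -/
def extB {n : ℕ} (Ω : Set (Vtx n)) : Set (Vtx n) := {z | z ∉ Ω ∧ ∃ w ∈ Ω, ZAdj z w}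

/-- Closure `Ω̄ = Ω ∪ τΩ`. -/
def clos {n : ℕ} (Ω : Set (Vtx n)) : Set (Vtx n) := Ω ∪ extB Ω

/-- Directed version of `E_Ω = E(Ω, Ω̄)`. -/
def dirE {n : ℕ} (Ω : Set (Vtx n)) : Set (Vtx n × Vtx n) :=
  {p | ZAdj p.1 p.2 ∧ p.1 ∈ clos Ω ∧ p.2 ∈ clos Ω ∧ (p.1 ∈ Ω ∨ p.2 ∈ Ω)}

/-- Directed edge boundary of `F`; each undirected boundary edge is counted once. -/
def dirBdry {n : ℕ} (F : Set (Vtx n)) : Set (Vtx n × Vtx n) :=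
  {p | ZAdj p.1 p.2 ∧ p.1 ∈ F ∧ p.2 ∉ F}

/-- `M ⊆ ℤⁿ` is a minimal (area-minimizing) subgraph. -/
def IsMinimal {n : ℕ} (M : Set (Vtx n)) : Prop :=
  ∀ Ω : Set (Vtx n), Ω.Finite → ∀ F : Set (Vtx n), symmDiff F M ⊆ Ω →
    (dirBdry M ∩ dirE Ω).ncard ≤ (dirBdry F ∩ dirE Ω).ncard

/-- Vertex boundary `δM`. -/
def vB {n : ℕ} (M : Set (Vtx n)) : Set (Vtx n) := {x | x ∈ M ∧ ∃ y, y ∉ M ∧ ZAdj x y}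

/-- Degree of `x` in the subgraph induced on `M`. -/
noncomputable def degIn {n : ℕ} (M : Set (Vtx n)) (x : Vtx n) : ℕ :=
  ({y | y ∈ M ∧ ZAdj x y}).ncard

/-- Combinatorial (graph) distance in `ℤⁿ`, which equals the ℓ¹ distance. -/
def latDist {n : ℕ} (x y : Vtx n) : ℕ := ∑ i, (x i - y i).natAbs

/-- The ∞-normed ball `B̂_r(x)`. -/
def Bhat {n : ℕ} (x : Vtx n) (r : ℕ) : Set (Vtx n) := {y | ∀ i, (y i - x i).natAbs ≤ r}

/-- The set of vertices of `M` lying in some unit `n`-cube all of whose vertices are in `M`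
(the vertices of the `n`-skeleton `Mⁿ`). -/
def skel {n : ℕ} (M : Set (Vtx n)) : Set (Vtx n) :=
  {x | x ∈ M ∧ ∃ v : Vtx n, (∀ i, x i = v i ∨ x i = v i + 1) ∧
    ∀ y : Vtx n, (∀ i, y i = v i ∨ y i = v i + 1) → y ∈ M}

lemma zadj_symm {n : ℕ} {p q : Vtx n} (h : ZAdj p q) : ZAdj q p := by
  unfold ZAdj at *
  have e : ∀ i, (q i - p i).natAbs = (p i - q i).natAbs := fun i => by omega
  rw [Finset.sum_congr rfl (fun i _ => e i)]; exact h

lemma zadj_struct {n : ℕ} {p q : Vtx n} (h : ZAdj p q) :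
    ∃ i, (p i - q i).natAbs = 1 ∧ ∀ j, j ≠ i → p j = q j := by
  unfold ZAdj at h
  have hex : ∃ i, (p i - q i).natAbs ≠ 0 := by
    by_contra hc
    push_neg at hc
    rw [Finset.sum_eq_zero (fun i _ => hc i)] at h
    exact one_ne_zero h.symm
  obtain ⟨i, hi⟩ := hex
  have h1 : (p i - q i).natAbs = 1 := by
    have hle : (p i - q i).natAbs ≤ 1 := by
      calc (p i - q i).natAbs ≤ ∑ j, (p j - q j).natAbs :=
        Finset.single_le_sum (f := fun j => (p j - q j).natAbs) (fun j _ => Nat.zero_le _) (Finset.mem_univ i)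
      _ = 1 := h
    omega
  refine ⟨i, h1, fun j hj => ?_⟩
  have hsum : (p i - q i).natAbs + ∑ k ∈ Finset.univ.erase i, (p k - q k).natAbs = 1 := by
    rw [Finset.add_sum_erase Finset.univ (fun k => (p k - q k).natAbs) (Finset.mem_univ i)]
    exact h
  have hz : ∑ k ∈ Finset.univ.erase i, (p k - q k).natAbs = 0 := by omega
  have := (Finset.sum_eq_zero_iff.mp hz) j (Finset.mem_erase.mpr ⟨hj, Finset.mem_univ j⟩)
  omega

lemma bhat_subset_pi {n : ℕ} (x : Vtx n) (s : ℕ) :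
    Bhat x s ⊆ ↑(Fintype.piFinset fun i => Finset.Icc (x i - s) (x i + s)) := by
  intro y hy
  simp only [Finset.coe_sort_coe, Finset.mem_coe, Fintype.mem_piFinset, Finset.mem_Icc]
  intro i
  have := hy i
  omega

lemma bhat_finite {n : ℕ} (x : Vtx n) (s : ℕ) : (Bhat x s).Finite :=
  Set.Finite.subset (Finset.finite_toSet _) (bhat_subset_pi x s)

lemma nbr_mem {n : ℕ} {x : Vtx n} {s : ℕ} {v y : Vtx n} (hv : v ∈ Bhat x s) (h : ZAdj v y) :
    y ∈ Bhat x (s + 1) := by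
  intro i
  have h1 : (v i - y i).natAbs ≤ 1 := by
    calc (v i - y i).natAbs ≤ ∑ j, (v j - y j).natAbs :=
      Finset.single_le_sum (f := fun j => (v j - y j).natAbs) (fun j _ => Nat.zero_le _) (Finset.mem_univ i)
    _ = 1 := h
  have := hv i
  omega

lemma exit_struct {n : ℕ} {x : Vtx n} {r : ℕ} {p1 p2 : Vtx n}
    (h1 : p1 ∈ Bhat x r) (h2 : p2 ∉ Bhat x r) (hadj : ZAdj p1 p2) :
    ∃ i, ((p1 i - x i = r ∧ p2 i - x i = r + 1) ∨
          (p1 i - x i = -r ∧ p2 i - x i = -(r + 1 : ℤ))) ∧ ∀ j, j ≠ i → p2 j = p1 j := by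
  obtain ⟨i, hi1, hi2⟩ := zadj_struct hadj
  have hj : ∃ j, ¬ (p2 j - x j).natAbs ≤ r := by
    by_contra hc; push_neg at hc; exact h2 (fun j => hc j)
  obtain ⟨j, hjr⟩ := hj
  have hji : j = i := by
    by_contra hne
    rw [← hi2 j hne] at hjr
    exact hjr (h1 j)
  subst hji
  have hb := h1 j
  refine ⟨j, ?_, fun k hk => (hi2 k hk).symm⟩
  omega

lemma W_card {n : ℕ} (x : Vtx n) (r : ℕ) (i : Fin n) :
    (Fintype.piFinset fun j => if j = i then ({x j} : Finset ℤ)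
      else Finset.Icc (x j - r) (x j + r)).card = (2 * r + 1) ^ (n - 1) := by
  classical
  rw [Fintype.card_piFinset]
  have hc : ∀ j : Fin n, (if j = i then ({x j} : Finset ℤ)
      else Finset.Icc (x j - r) (x j + r)).card = if j = i then 1 else 2 * r + 1 := by
    intro j
    by_cases hj : j = i
    · simp [hj]
    · simp only [hj, if_false]
      rw [Int.card_Icc]
      omega
  rw [Finset.prod_congr rfl (fun j _ => hc j)]
  rw [← Finset.prod_erase_mul Finset.univ _ (Finset.mem_univ i)]
  rw [if_pos rfl, mul_one]
  rw [Finset.prod_congr rfl (fun j hj => if_neg (Finset.ne_of_mem_erase hj))]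
  rw [Finset.prod_const, Finset.card_erase_of_mem (Finset.mem_univ i)]
  simp

lemma exit_count {n : ℕ} (x : Vtx n) (r : ℕ) :
    ({p : Vtx n × Vtx n | p.1 ∈ Bhat x r ∧ p.2 ∉ Bhat x r ∧ ZAdj p.1 p.2}).ncard
      ≤ 2 * n * (2 * r + 1) ^ (n - 1) := by
  classical
  set E := {p : Vtx n × Vtx n | p.1 ∈ Bhat x r ∧ p.2 ∉ Bhat x r ∧ ZAdj p.1 p.2} with hE
  rcases Nat.eq_zero_or_pos n with hn | hn
  · have : E = ∅ := by
      ext p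
      simp only [hE, Set.mem_setOf_eq, Set.mem_empty_iff_false, iff_false]
      rintro ⟨-, h2, -⟩
      exact h2 (fun i => absurd i.isLt (by omega))
    rw [this, Set.ncard_empty]
    exact Nat.zero_le _
  have : Inhabited (Fin n) := ⟨⟨0, hn⟩⟩
  set W : Fin n → Finset (Vtx n) := fun i => Fintype.piFinset fun j =>
    if j = i then ({x j} : Finset ℤ) else Finset.Icc (x j - r) (x j + r) with hW
  set T : Finset ((Fin n × Bool) × Vtx n) :=
    Finset.univ.biUnion (fun q => {q} ×ˢ W q.1) with hT
  have hstruct : ∀ p : Vtx n × Vtx n, p ∈ E →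
      ∃ i, ((p.1 i - x i = r ∧ p.2 i - x i = r + 1) ∨
            (p.1 i - x i = -r ∧ p.2 i - x i = -(r + 1 : ℤ))) ∧ ∀ j, j ≠ i → p.2 j = p.1 j :=
    fun p hp => exit_struct hp.1 hp.2.1 hp.2.2
  choose! idx hidx using hstruct
  set f : Vtx n × Vtx n → (Fin n × Bool) × Vtx n := fun p =>
    ((idx p, decide (p.2 (idx p) - x (idx p) = r + 1)),
      Function.update p.1 (idx p) (x (idx p))) with hf
  have hmaps : ∀ p ∈ E, f p ∈ (↑T : Set ((Fin n × Bool) × Vtx n)) := by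
    intro p hp
    simp only [Finset.mem_coe, hT, Finset.mem_biUnion]
    refine ⟨(idx p, decide (p.2 (idx p) - x (idx p) = r + 1)), Finset.mem_univ _, ?_⟩
    rw [Finset.mem_product]
    refine ⟨Finset.mem_singleton_self _, ?_⟩
    simp only [hW, Fintype.mem_piFinset]
    intro j
    by_cases hj : j = idx p
    · subst hj
      simp [hf, Function.update]
    · simp only [hf, Function.update_of_ne hj]
      simp only [hj, if_false, Finset.mem_Icc]
      have := hp.1 j
      omega
  have hinj : Set.InjOn f E := by
    intro p hp q hq hfeq
    have h1 : idx p = idx q := congrArg (fun z => z.1.1) hfeq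
    set i := idx p with hi
    have hsign : decide (p.2 i - x i = (r : ℤ) + 1) = decide (q.2 i - x i = (r : ℤ) + 1) := by
      have := congrArg (fun z => z.1.2) hfeq
      simpa [hf, ← h1] using this
    have hupd : Function.update p.1 i (x i) = Function.update q.1 i (x i) := by
      have := congrArg (fun z => z.2) hfeq
      simpa [hf, ← h1] using this
    obtain ⟨hpc, hpj⟩ := hidx p hp
    rw [← hi] at hpc hpj
    obtain ⟨hqc, hqj⟩ := hidx q hq
    rw [← h1] at hqc hqj
    have hoff : ∀ j, j ≠ i → p.1 j = q.1 j := by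
      intro j hj
      have := congrFun hupd j
      rwa [Function.update_of_ne hj, Function.update_of_ne hj] at this
    -- determine the case from the sign bit
    have hcase : (p.1 i - x i = r ∧ p.2 i - x i = (r:ℤ) + 1) ∧
                 (q.1 i - x i = r ∧ q.2 i - x i = (r:ℤ) + 1) ∨
                 (p.1 i - x i = -r ∧ p.2 i - x i = -((r:ℤ) + 1)) ∧
                 (q.1 i - x i = -r ∧ q.2 i - x i = -((r:ℤ) + 1)) := by
      rcases hpc with hc1 | hc1 <;> rcases hqc with hc2 | hc2
      · exact Or.inl ⟨hc1, hc2⟩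
      · exfalso
        have hd : decide (q.2 i - x i = (r:ℤ) + 1) = true := by
          rw [← hsign]; exact decide_eq_true hc1.2
        have := of_decide_eq_true hd
        have := hc2.2
        omega
      · exfalso
        have hd : decide (p.2 i - x i = (r:ℤ) + 1) = true := by
          rw [hsign]; exact decide_eq_true hc2.2
        have := of_decide_eq_true hd
        have := hc1.2
        omega
      · exact Or.inr ⟨hc1, hc2⟩
    have h1eq : p.1 = q.1 := by
      funext j
      by_cases hj : j = i
      · subst hj
        rcases hcase with ⟨⟨a,-⟩,⟨b,-⟩⟩ | ⟨⟨a,-⟩,⟨b,-⟩⟩ <;> omega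
      · exact hoff j hj
    have h2eq : p.2 = q.2 := by
      funext j
      by_cases hj : j = i
      · subst hj
        rcases hcase with ⟨⟨-,a⟩,⟨-,b⟩⟩ | ⟨⟨-,a⟩,⟨-,b⟩⟩ <;> omega
      · rw [hpj j hj, hqj j hj, hoff j hj]
    exact Prod.ext h1eq h2eq
  have hcard : E.ncard ≤ T.card := by
    have := Set.ncard_le_ncard_of_injOn f hmaps hinj (Finset.finite_toSet T)
    rwa [Set.ncard_coe_finset] at this
  refine hcard.trans ?_
  calc T.card ≤ ∑ q : Fin n × Bool, ({q} ×ˢ W q.1).card := Finset.card_biUnion_le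
    _ = ∑ q : Fin n × Bool, (2 * r + 1) ^ (n - 1) := by
        refine Finset.sum_congr rfl (fun q _ => ?_)
        rw [Finset.card_product, Finset.card_singleton, one_mul, hW, W_card]
    _ = 2 * n * (2 * r + 1) ^ (n - 1) := by
        rw [Finset.sum_const, Finset.card_univ, Fintype.card_prod, Fintype.card_fin,
          Fintype.card_bool, smul_eq_mul]
        ring

/-- polynomial growth of the boundary of a minimal subgraph of `ℤⁿ`:
`|δM ∩ B̂_r(x)| ≤ 4n²(2r+1)^{n-1}`. -/
theorem boundary_growth {n : ℕ} {M : Set (Vtx n)} (hM : IsMinimal M)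
    (x : Vtx n) (r : ℕ) :
    (vB M ∩ Bhat x r).ncard ≤ 4 * n ^ 2 * (2 * r + 1) ^ (n - 1) := by
  classical
  rcases Nat.eq_zero_or_pos n with hn | hn
  · have hvb : vB M = ∅ := by
      ext v
      simp only [vB, Set.mem_setOf_eq, Set.mem_empty_iff_false, iff_false]
      rintro ⟨-, y, -, hadj⟩
      unfold ZAdj at hadj
      subst hn
      simp at hadj
    rw [hvb, Set.empty_inter, Set.ncard_empty]
    exact Nat.zero_le _
  set Ω : Set (Vtx n) := Bhat x r \ M with hΩ
  set F : Set (Vtx n) := M ∪ Bhat x r with hF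
  set E : Set (Vtx n × Vtx n) :=
    {p : Vtx n × Vtx n | p.1 ∈ Bhat x r ∧ p.2 ∉ Bhat x r ∧ ZAdj p.1 p.2} with hE
  set D : Set (Vtx n × Vtx n) := dirBdry M ∩ dirE Ω with hD
  have hΩfin : Ω.Finite := (bhat_finite x r).subset Set.diff_subset
  have hEfin : E.Finite := by
    apply Set.Finite.subset (((bhat_finite x r).prod (bhat_finite x (r + 1))))
    rintro ⟨p1, p2⟩ ⟨h1, h2, hadj⟩
    exact ⟨h1, nbr_mem h1 hadj⟩
  have hclos : clos Ω ⊆ Bhat x (r + 1) := by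
    rintro z (hz | ⟨-, w, hw, hadj⟩)
    · intro i; have := hz.1 i; omega
    · exact nbr_mem hw.1 (zadj_symm hadj)
  have hDfin : D.Finite := by
    apply Set.Finite.subset ((bhat_finite x (r + 1)).prod (bhat_finite x (r + 1)))
    rintro ⟨p1, p2⟩ ⟨-, -, hc1, hc2, -⟩
    exact ⟨hclos hc1, hclos hc2⟩
  -- injection from vB M ∩ Bhat x r into D ∪ E
  set g : Vtx n → Vtx n := fun v =>
    if h : ∃ y, y ∉ M ∧ ZAdj v y then h.choose else v with hg
  set f : Vtx n → Vtx n × Vtx n := fun v => (v, g v) with hf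
  have hgspec : ∀ v ∈ vB M, g v ∉ M ∧ ZAdj v (g v) := by
    intro v hv
    rw [hg]
    simp only
    rw [dif_pos hv.2]
    exact hv.2.choose_spec
  have key1 : (vB M ∩ Bhat x r).ncard ≤ (D ∪ E).ncard := by
    apply Set.ncard_le_ncard_of_injOn f ?_ ?_ (hDfin.union hEfin)
    · rintro v ⟨hvM, hvB⟩
      obtain ⟨hgM, hgadj⟩ := hgspec v hvM
      by_cases hy : g v ∈ Bhat x r
      · left
        refine ⟨⟨hgadj, hvM.1, hgM⟩, hgadj, ?_, ?_, ?_⟩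
        · exact Or.inr ⟨fun hvΩ => hvΩ.2 hvM.1, g v, ⟨hy, hgM⟩, hgadj⟩
        · exact Or.inl ⟨hy, hgM⟩
        · exact Or.inr ⟨hy, hgM⟩
      · right
        exact ⟨hvB, hy, hgadj⟩
    · intro a _ b _ hab
      exact congrArg Prod.fst hab
  have hsymm : symmDiff F M ⊆ Ω := by
    intro z hz
    rw [Set.symmDiff_def] at hz
    rcases hz with ⟨hzF, hzM⟩ | ⟨hzM, hzF⟩
    · rcases hzF with h | h
      · exact absurd h hzM
      · exact ⟨h, hzM⟩
    · exact absurd (Or.inl hzM) hzF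
  have key2 : D.ncard ≤ (dirBdry F ∩ dirE Ω).ncard := hM Ω hΩfin F hsymm
  have key3 : dirBdry F ∩ dirE Ω ⊆ E := by
    rintro ⟨p1, p2⟩ ⟨⟨hadj, h1F, h2F⟩, -, -, -, hor⟩
    have h2B : p2 ∉ Bhat x r := fun hb => h2F (Or.inr hb)
    have h1Ω : p1 ∈ Ω := by
      rcases hor with h | h
      · exact h
      · exact absurd h.1 h2B
    exact ⟨h1Ω.1, h2B, hadj⟩
  have key4 : E.ncard ≤ 2 * n * (2 * r + 1) ^ (n - 1) := exit_count x r
  calc (vB M ∩ Bhat x r).ncard ≤ (D ∪ E).ncard := key1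
    _ ≤ D.ncard + E.ncard := Set.ncard_union_le _ _
    _ ≤ (dirBdry F ∩ dirE Ω).ncard + E.ncard := by omega
    _ ≤ E.ncard + E.ncard := by
        have := Set.ncard_le_ncard key3 hEfin
        omega
    _ ≤ 2 * n * (2 * r + 1) ^ (n - 1) + 2 * n * (2 * r + 1) ^ (n - 1) := by omega
    _ ≤ 4 * n ^ 2 * (2 * r + 1) ^ (n - 1) := by nlinarith [Nat.one_le_iff_ne_zero.mpr (Nat.pos_iff_ne_zero.mp hn)]
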